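/- arXiv:2002.12743 — 3 statements merged into one kernel-verified Lean document; each statement's English description precedes it below -/
import Mathlib

section
/- Let G and H be groups and p : G → H a surjective group homomorphism, and let K = ker p. If φ : G → ℝ is a homogeneous quasimorphism that vanishes on K, then there exists a homogeneous quasimorphism ψ : H → ℝ such that φ = ψ ∘ p. -/
/-! If `p x = p y` then `y^{-n} x^n` lies in the kernel, so with `D` a defect bound for `φ`,
`|n φ(x) - n φ(y)| = |φ(y^n · y^{-n} x^n) - φ(y^n) - φ(y^{-n} x^n)| ≤ D` for every `n`. Hence `φ`
is constant on the fibres of `p` and factors through it; defect and homogeneity pass to the factor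
because `p` is onto. -/

/-- A quasimorphism on a group: a real-valued function with finite defect. -/
def IsQuasimorphism {G : Type*} [Group G] (f : G → ℝ) : Prop :=
  ∃ C : ℝ, ∀ g h : G, |f (g * h) - f g - f h| ≤ C

/-- A homogeneous function: `f (g ^ n) = n * f g` for all integers `n`. -/
def IsHomogeneous {G : Type*} [Group G] (f : G → ℝ) : Prop :=
  ∀ (g : G) (n : ℤ), f (g ^ n) = (n : ℝ) * f g

lemma eq_zero_of_forall_nat_mul_abs_le {a D : ℝ} (h : ∀ n : ℕ, n * |a| ≤ D) : a = 0 := by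
  by_contra ha
  have ha' : 0 < |a| := abs_pos.mpr ha
  obtain ⟨n, hn⟩ := exists_nat_gt (D / |a|)
  have := (div_lt_iff₀ ha').mp hn
  linarith [h n]

section

variable {G H : Type*} [Group G] [Group H]

lemma IsQuasimorphism.factorsThrough_of_ker {φ : G → ℝ} (hqm : IsQuasimorphism φ)
    (hhom : IsHomogeneous φ) (p : G →* H) (hker : ∀ g ∈ p.ker, φ g = 0) :
    φ.FactorsThrough p := by
  intro x y hxy
  obtain ⟨D, hD⟩ := hqm
  rw [← sub_eq_zero]
  refine eq_zero_of_forall_nat_mul_abs_le (D := D) fun n => ?_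
  have hmem : (y ^ (n : ℤ))⁻¹ * x ^ (n : ℤ) ∈ p.ker := by simp [MonoidHom.mem_ker, hxy]
  have hdefect := hD (y ^ (n : ℤ)) ((y ^ (n : ℤ))⁻¹ * x ^ (n : ℤ))
  rw [mul_inv_cancel_left, hker _ hmem, hhom, hhom, sub_zero, ← mul_sub] at hdefect
  simpa [abs_mul] using hdefect

lemma IsQuasimorphism.of_comp {p : G →* H} (hp : Function.Surjective p) {ψ : H → ℝ}
    (h : IsQuasimorphism (ψ ∘ p)) : IsQuasimorphism ψ := by
  obtain ⟨D, hD⟩ := h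
  refine ⟨D, hp.forall₂.mpr fun g₁ g₂ => ?_⟩
  simpa [← map_mul] using hD g₁ g₂

lemma IsHomogeneous.of_comp {p : G →* H} (hp : Function.Surjective p) {ψ : H → ℝ}
    (h : IsHomogeneous (ψ ∘ p)) : IsHomogeneous ψ :=
  hp.forall.mpr fun g n => by simpa [← map_zpow] using h g n

end

/-- Shtern: a homogeneous quasimorphism vanishing on the kernel of a
surjective homomorphism `p : G → H` descends to a homogeneous quasimorphism on `H`. -/
theorem shtern_descends {G H : Type*} [Group G] [Group H] (p : G →* H)
    (hp : Function.Surjective p) (φ : G → ℝ)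
    (hqm : IsQuasimorphism φ) (hhom : IsHomogeneous φ)
    (hker : ∀ g : G, g ∈ p.ker → φ g = 0) :
    ∃ ψ : H → ℝ, IsQuasimorphism ψ ∧ IsHomogeneous ψ ∧ ∀ g : G, φ g = ψ (p g) := by
  set ψ : H → ℝ := Function.extend p φ fun _ => 0
  have hφ : ψ ∘ p = φ := (hqm.factorsThrough_of_ker hhom p hker).extend_comp _
  exact ⟨ψ, .of_comp hp (hφ ▸ hqm), .of_comp hp (hφ ▸ hhom), fun g => congrFun hφ.symm g⟩
end

section
/- Let G and H be groups, p : G → H a surjective group homomorphism with kernel K. Suppose that every homogeneous quasimorphism on H is identically zero, and that there exists a function f : K → ℝ such that every homogeneous quasimorphism on K is a real scalar multiple of f. Then any two homogeneous quasimorphisms on G are linearly dependent over ℝ; that is, the real vector space of homogeneous quasimorphisms on G has dimension at most 1. -/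
/-!
A homogeneous quasimorphism `φ` on `G` vanishing on `K = ker p` is constant on the fibres
of `p`: if `p g₁ = p g₂` then `|n (φ g₁ - φ g₂)| = |φ (g₁ⁿ) - φ (g₂ⁿ)|` is bounded by the
defect for every `n`. Hence `φ` descends to a homogeneous quasimorphism on `H`, which is zero.
So restriction to `K` is injective on homogeneous quasimorphisms of `G`, and its image lies in
the line spanned by `f`; given `φ₁|_K = c₁ f` and `φ₂|_K = c₂ f`, any nontrivial `(a, b)` with
`a c₁ + b c₂ = 0` makes `a φ₁ + b φ₂` vanish.
-/

lemma exists_mul_add_mul_eq_zero {R : Type*} [CommRing R] [Nontrivial R] (c₁ c₂ : R) :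
    ∃ a b : R, ¬(a = 0 ∧ b = 0) ∧ a * c₁ + b * c₂ = 0 := by
  by_cases h : c₁ = 0
  · exact ⟨1, 0, by simp, by simp [h]⟩
  · exact ⟨c₂, -c₁, fun hab => h (neg_eq_zero.mp hab.2), by ring⟩

lemma eq_zero_of_forall_abs_nat_mul_le {x C : ℝ} (h : ∀ n : ℕ, |n * x| ≤ C) : x = 0 := by
  by_contra hx
  obtain ⟨n, hn⟩ := exists_nat_gt (C / |x|)
  rw [div_lt_iff₀ (abs_pos.mpr hx)] at hn
  have hbound := h n
  rw [abs_mul, Nat.abs_cast] at hbound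
  linarith

section

variable {G H : Type*} [Group G] [Group H]

namespace IsQuasimorphism

lemma add {φ ψ : G → ℝ} (hφ : IsQuasimorphism φ) (hψ : IsQuasimorphism ψ) :
    IsQuasimorphism (φ + ψ) := by
  obtain ⟨C, hC⟩ := hφ
  obtain ⟨D, hD⟩ := hψ
  refine ⟨C + D, fun g h => ?_⟩
  calc |(φ + ψ) (g * h) - (φ + ψ) g - (φ + ψ) h|
      = |(φ (g * h) - φ g - φ h) + (ψ (g * h) - ψ g - ψ h)| := by
        simp only [Pi.add_apply]; ring_nf
    _ ≤ |φ (g * h) - φ g - φ h| + |ψ (g * h) - ψ g - ψ h| := abs_add_le _ _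
    _ ≤ C + D := add_le_add (hC g h) (hD g h)

lemma smul {φ : G → ℝ} (hφ : IsQuasimorphism φ) (c : ℝ) : IsQuasimorphism (c • φ) := by
  obtain ⟨C, hC⟩ := hφ
  refine ⟨|c| * C, fun g h => ?_⟩
  calc |(c • φ) (g * h) - (c • φ) g - (c • φ) h| = |c| * |φ (g * h) - φ g - φ h| := by
        simp only [Pi.smul_apply, smul_eq_mul, ← abs_mul]; ring_nf
    _ ≤ |c| * C := mul_le_mul_of_nonneg_left (hC g h) (abs_nonneg c)

lemma comp {φ : G → ℝ} (hφ : IsQuasimorphism φ) (f : H →* G) : IsQuasimorphism (φ ∘ f) := by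
  obtain ⟨C, hC⟩ := hφ
  exact ⟨C, fun g h => by simpa only [Function.comp_apply, map_mul] using hC (f g) (f h)⟩

lemma of_comp_surjective {p : G →* H} (hp : Function.Surjective p) {ψ : H → ℝ}
    (hψ : IsQuasimorphism (ψ ∘ p)) : IsQuasimorphism ψ := by
  obtain ⟨C, hC⟩ := hψ
  refine ⟨C, fun h₁ h₂ => ?_⟩
  obtain ⟨g₁, rfl⟩ := hp h₁
  obtain ⟨g₂, rfl⟩ := hp h₂
  simpa only [Function.comp_apply, map_mul] using hC g₁ g₂

end IsQuasimorphism

namespace IsHomogeneous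

lemma add {φ ψ : G → ℝ} (hφ : IsHomogeneous φ) (hψ : IsHomogeneous ψ) :
    IsHomogeneous (φ + ψ) := fun g n => by
  simp only [Pi.add_apply, hφ g n, hψ g n]; ring

lemma smul {φ : G → ℝ} (hφ : IsHomogeneous φ) (c : ℝ) : IsHomogeneous (c • φ) := fun g n => by
  simp only [Pi.smul_apply, smul_eq_mul, hφ g n]; ring

lemma comp {φ : G → ℝ} (hφ : IsHomogeneous φ) (f : H →* G) : IsHomogeneous (φ ∘ f) :=
  fun g n => by simpa only [Function.comp_apply, map_zpow] using hφ (f g) n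

lemma of_comp_surjective {p : G →* H} (hp : Function.Surjective p) {ψ : H → ℝ}
    (hψ : IsHomogeneous (ψ ∘ p)) : IsHomogeneous ψ := by
  intro h n
  obtain ⟨g, rfl⟩ := hp h
  simpa only [Function.comp_apply, map_zpow] using hψ g n

end IsHomogeneous

namespace IsQuasimorphism

variable {p : G →* H} {φ : G → ℝ}

lemma eq_of_map_eq (hq : IsQuasimorphism φ) (hh : IsHomogeneous φ)
    (hker : ∀ k ∈ p.ker, φ k = 0) {g₁ g₂ : G} (hg : p g₁ = p g₂) : φ g₁ = φ g₂ := by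
  obtain ⟨C, hC⟩ := hq
  have hfibre : ∀ x y : G, p x = p y → |φ x - φ y| ≤ C := by
    intro x y hxy
    have hk : y⁻¹ * x ∈ p.ker := by
      rw [MonoidHom.mem_ker, map_mul, map_inv, hxy, inv_mul_cancel]
    simpa only [mul_inv_cancel_left, hker _ hk, sub_zero] using hC y (y⁻¹ * x)
  refine sub_eq_zero.mp (eq_zero_of_forall_abs_nat_mul_le (C := C) fun n => ?_)
  have hpow : p (g₁ ^ (n : ℤ)) = p (g₂ ^ (n : ℤ)) := by rw [map_zpow, map_zpow, hg]
  simpa only [hh _ (n : ℤ), Int.cast_natCast, mul_sub] using hfibre _ _ hpow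

theorem eq_zero_of_forall_mem_ker (hp : Function.Surjective p)
    (hQH : ∀ ψ : H → ℝ, IsQuasimorphism ψ → IsHomogeneous ψ → ∀ h : H, ψ h = 0)
    (hq : IsQuasimorphism φ) (hh : IsHomogeneous φ) (hker : ∀ k ∈ p.ker, φ k = 0) (g : G) :
    φ g = 0 := by
  set ψ : H → ℝ := φ ∘ Function.surjInv hp
  have hφ : ψ ∘ p = φ :=
    funext fun g => hq.eq_of_map_eq hh hker (Function.surjInv_eq hp (p g))
  rw [← hφ] at hq hh ⊢
  exact hQH ψ (hq.of_comp_surjective hp) (hh.of_comp_surjective hp) (p g)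

end IsQuasimorphism

end

/-- if `p : G → H` is surjective, every homogeneous quasimorphism on `H`
vanishes, and every homogeneous quasimorphism on `K = ker p` is a scalar multiple of one
fixed function `f`, then the space of homogeneous quasimorphisms on `G` has dimension
at most 1: any two homogeneous quasimorphisms on `G` are linearly dependent over `ℝ`. -/
theorem dim_q_le_one {G H : Type*} [Group G] [Group H] (p : G →* H)
    (hp : Function.Surjective p)
    (hQH : ∀ ψ : H → ℝ, IsQuasimorphism ψ → IsHomogeneous ψ → ∀ h : H, ψ h = 0)
    (hQK : ∃ f : p.ker → ℝ, ∀ φ : p.ker → ℝ, IsQuasimorphism φ → IsHomogeneous φ →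
      ∃ c : ℝ, ∀ x : p.ker, φ x = c * f x) :
    ∀ φ₁ φ₂ : G → ℝ, IsQuasimorphism φ₁ → IsHomogeneous φ₁ →
      IsQuasimorphism φ₂ → IsHomogeneous φ₂ →
      ∃ a b : ℝ, ¬(a = 0 ∧ b = 0) ∧ ∀ g : G, a * φ₁ g + b * φ₂ g = 0 := by
  obtain ⟨f, hf⟩ := hQK
  intro φ₁ φ₂ hq₁ hh₁ hq₂ hh₂
  obtain ⟨c₁, hc₁⟩ := hf _ (hq₁.comp p.ker.subtype) (hh₁.comp p.ker.subtype)
  obtain ⟨c₂, hc₂⟩ := hf _ (hq₂.comp p.ker.subtype) (hh₂.comp p.ker.subtype)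
  obtain ⟨a, b, hab, hc⟩ := exists_mul_add_mul_eq_zero c₁ c₂
  have hker : ∀ k ∈ p.ker, (a • φ₁ + b • φ₂) k = 0 := fun k hk => by
    have h₁ : φ₁ k = c₁ * f ⟨k, hk⟩ := hc₁ ⟨k, hk⟩
    have h₂ : φ₂ k = c₂ * f ⟨k, hk⟩ := hc₂ ⟨k, hk⟩
    simp only [Pi.add_apply, Pi.smul_apply, smul_eq_mul, h₁, h₂]
    linear_combination f ⟨k, hk⟩ * hc
  refine ⟨a, b, hab, fun g => ?_⟩
  simpa using ((hq₁.smul a).add (hq₂.smul b)).eq_zero_of_forall_mem_ker hp hQH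
    ((hh₁.smul a).add (hh₂.smul b)) hker g
end

section
/- Let G be a group, let χ : G × G → ℤ be a bounded 2-cocycle (i.e. χ(s,t) + χ(st,u) = χ(t,u) + χ(s,tu) for all s,t,u ∈ G, and sup |χ| < ∞, with χ(1,1) = 0), and for a nonzero integer n let G_n denote the central extension G × ℤ with multiplication (s,i)·(t,j) = (st, i + j + n·χ(s,t)), and let φ_n : G_n → ℝ be the homogenization of the quasimorphism (t,j) ↦ j. Then the defect of φ_n satisfies D(φ_n) = |n|·D(φ_1). -/
open Filter Topology

/-- Multiplication of the central extension `G × ℤ` determined by `n` times the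
integral 2-cocycle `χ`: `(s,i)·(t,j) = (st, i + j + n·χ(s,t))`. -/
def extMul {G : Type*} [Group G] (n : ℤ) (χ : G → G → ℤ) (x y : G × ℤ) : G × ℤ :=
  (x.1 * y.1, x.2 + y.2 + n * χ x.1 y.1)

/-- Powers in the central extension `G × ℤ` (with `x ^ 0 = (1, 0)`). -/
def extPow {G : Type*} [Group G] (n : ℤ) (χ : G → G → ℤ) (x : G × ℤ) : ℕ → G × ℤ
  | 0 => (1, 0)
  | k + 1 => extMul n χ (extPow n χ x k) x

/-- The defect of a function on the central extension `G × ℤ` with the multiplication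
twisted by `n` times the cocycle `χ`. -/
noncomputable def extDefect {G : Type*} [Group G] (n : ℤ) (χ : G → G → ℤ)
    (φ : G × ℤ → ℝ) : ℝ :=
  sSup {r : ℝ | ∃ x y : G × ℤ, r = |φ (extMul n χ x y) - φ x - φ y|}

/-! In `Gₙ` one computes `(g, i)ᵏ = (gᵏ, k i + n ∑_{j<k} χ(gʲ, g))`, so every homogenization is
`φₙ(g, i) = i + n ψ(g)`, where `ψ(g)` is the asymptotic mean of the cocycle sums and does not
depend on `n`. Consequently `φₙ(xy) - φₙ(x) - φₙ(y) = n (χ(s,t) + ψ(st) - ψ(s) - ψ(t))`, and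
taking suprema of absolute values scales by `|n|`. -/

section CentralExtension

variable {G : Type*} [Group G] (n : ℤ) (χ : G → G → ℤ)

lemma extPow_eq (x : G × ℤ) (k : ℕ) :
    extPow n χ x k = (x.1 ^ k, k * x.2 + n * ∑ j ∈ Finset.range k, χ (x.1 ^ j) x.1) := by
  induction k with
  | zero => simp [extPow]
  | succ k ih =>
    rw [extPow, ih, extMul, pow_succ, Finset.sum_range_succ]
    refine Prod.ext rfl ?_
    push_cast
    ring

lemma tendsto_extPow_snd_div {g : G} {c : ℝ}
    (hc : Tendsto (fun k : ℕ => (∑ j ∈ Finset.range k, χ (g ^ j) g : ℝ) / k) atTop (𝓝 c))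
    (i : ℤ) :
    Tendsto (fun k : ℕ => ((extPow n χ (g, i) k).2 : ℝ) / k) atTop (𝓝 (i + n * c)) := by
  refine (tendsto_const_nhds.add (hc.const_mul (n : ℝ))).congr' ?_
  filter_upwards [eventually_ne_atTop 0] with k hk
  rw [extPow_eq]
  push_cast
  field_simp

lemma homogenization_eq {φ₁ φ : G × ℤ → ℝ}
    (hφ₁ : ∀ x : G × ℤ, Tendsto (fun k : ℕ => ((extPow 1 χ x k).2 : ℝ) / k) atTop (𝓝 (φ₁ x)))
    (hφ : ∀ x : G × ℤ, Tendsto (fun k : ℕ => ((extPow n χ x k).2 : ℝ) / k) atTop (𝓝 (φ x)))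
    (g : G) (i : ℤ) :
    φ (g, i) = i + n * φ₁ (g, 0) := by
  have hmean : Tendsto (fun k : ℕ => (∑ j ∈ Finset.range k, χ (g ^ j) g : ℝ) / k) atTop
      (𝓝 (φ₁ (g, 0))) := by
    simpa [extPow_eq] using hφ₁ (g, 0)
  exact tendsto_nhds_unique (hφ (g, i)) (tendsto_extPow_snd_div n χ hmean i)

lemma extDefect_eq {φ : G × ℤ → ℝ} {ψ : G → ℝ} (hφ : ∀ g i, φ (g, i) = i + n * ψ g) :
    extDefect n χ φ = |(n : ℝ)| *
      sSup (Set.range fun p : G × G => |χ p.1 p.2 + ψ (p.1 * p.2) - ψ p.1 - ψ p.2|) := by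
  have hdiff : ∀ x y : G × ℤ, φ (extMul n χ x y) - φ x - φ y =
      n * (χ x.1 y.1 + ψ (x.1 * y.1) - ψ x.1 - ψ y.1) := by
    intro x y
    simp only [extMul, hφ]
    push_cast
    ring
  rw [← smul_eq_mul, ← Real.sSup_smul_of_nonneg (abs_nonneg _), extDefect]
  congr 1
  ext r
  simp only [Set.mem_ofPred_eq, Set.mem_smul_set, Set.mem_range, hdiff, abs_mul, smul_eq_mul]
  constructor
  · rintro ⟨x, y, rfl⟩
    exact ⟨_, ⟨(x.1, y.1), rfl⟩, rfl⟩
  · rintro ⟨_, ⟨p, rfl⟩, rfl⟩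
    exact ⟨(p.1, 0), (p.2, 0), rfl⟩

end CentralExtension

theorem defect_central_extension_general {G : Type*} [Group G] (χ : G → G → ℤ)
    (n : ℤ)
    (φ₁ φₙ : G × ℤ → ℝ)
    (hφ₁ : ∀ x : G × ℤ, Tendsto (fun k : ℕ => ((extPow 1 χ x k).2 : ℝ) / (k : ℝ))
      atTop (𝓝 (φ₁ x)))
    (hφₙ : ∀ x : G × ℤ, Tendsto (fun k : ℕ => ((extPow n χ x k).2 : ℝ) / (k : ℝ))
      atTop (𝓝 (φₙ x))) :
    extDefect n χ φₙ = |(n : ℝ)| * extDefect 1 χ φ₁ := by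
  rw [extDefect_eq n χ (homogenization_eq n χ hφ₁ hφₙ),
    extDefect_eq 1 χ (homogenization_eq 1 χ hφ₁ hφ₁)]
  simp

/-- if `χ` is a bounded 2-cocycle with `χ(1,1) = 0`, `n ≠ 0`, and
`φ₁`, `φₙ` are the homogenizations of the second-coordinate projections on the central
extensions `G₁` and `Gₙ` respectively, then `D(φₙ) = |n| · D(φ₁)`. -/
theorem defect_central_extension {G : Type*} [Group G] (χ : G → G → ℤ)
    (hcoc : ∀ s t u : G, χ s t + χ (s * t) u = χ t u + χ s (t * u))
    (hbdd : ∃ C : ℤ, ∀ s t : G, |χ s t| ≤ C)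
    (hone : χ 1 1 = 0)
    (n : ℤ) (hn : n ≠ 0)
    (φ₁ φₙ : G × ℤ → ℝ)
    (hφ₁ : ∀ x : G × ℤ, Tendsto (fun k : ℕ => ((extPow 1 χ x k).2 : ℝ) / (k : ℝ))
      atTop (𝓝 (φ₁ x)))
    (hφₙ : ∀ x : G × ℤ, Tendsto (fun k : ℕ => ((extPow n χ x k).2 : ℝ) / (k : ℝ))
      atTop (𝓝 (φₙ x))) :
    extDefect n χ φₙ = |(n : ℝ)| * extDefect 1 χ φ₁ :=
  defect_central_extension_general χ n φ₁ φₙ hφ₁ hφₙ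
end
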